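/- arXiv:1011.4384 — 9 statements merged into one kernel-verified Lean document; each statement's English description precedes it below -/
import Mathlib

section
/- Every strongly consistent canonical system is coherent: if G contains a left-introduction rule ⟨S₁,S₂⟩ / ⋄(p₁,…,pₙ) ⇒ and a right-introduction rule S₃ / ⇒ ⋄(p₁,…,pₙ) for the same connective ⋄ such that the set of Horn clauses S₁ ∪ S₂ ∪ S₃ is classically satisfiable, then the empty sequent is derivable in G from the assumptions { ⇒ p₁, p₂ ⇒ }. -/
/-- A propositional language: a type of connectives with arities. -/
structure Lang where
  Conn : Type
  arity : Conn → ℕ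

/-- Formulas over a language, with atoms indexed by ℕ. -/
inductive Fm (L : Lang) : Type
  | atom : ℕ → Fm L
  | conn : (c : L.Conn) → (Fin (L.arity c) → Fm L) → Fm L

/-- The substitution determined by its values on atoms. -/
def Fm.subst {L : Lang} (σ : ℕ → Fm L) : Fm L → Fm L
  | .atom n => σ n
  | .conn c f => .conn c (fun i => (f i).subst σ)

/-- A non-strict single-conclusion sequent Γ ⇒ E. -/
structure Sequent (L : Lang) where
  left : Set (Fm L)
  right : Option (Fm L)

/-- A Horn clause over atoms p₁,…,pₙ (represented by `Fin n`). -/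
structure Clause (n : ℕ) where
  lhs : Set (Fin n)
  rhs : Option (Fin n)

/-- A canonical right-introduction rule for a connective. -/
structure RightRule (L : Lang) where
  conn : L.Conn
  prem : Set (Clause (L.arity conn))

/-- A canonical left-introduction rule, with hard and soft premises. -/
structure LeftRule (L : Lang) where
  conn : L.Conn
  hard : Set (Clause (L.arity conn))
  soft : Set (Set (Fin (L.arity conn)))

/-- A canonical system: a collection of canonical rules. -/
structure CanSys (L : Lang) where
  rights : Set (RightRule L)
  lefts : Set (LeftRule L)

/-- The sequent obtained by instantiating a clause with a substitution. -/
def Clause.seq {L : Lang} {n : ℕ} (σ : Fin n → Fm L) (c : Clause n) : Sequent L :=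
  ⟨σ '' c.lhs, c.rhs.map σ⟩

/-- Derivability in a canonical system `G` from assumptions `S`,
where all cut formulas must belong to `C`. -/
inductive Deriv {L : Lang} (G : CanSys L) (S : Set (Sequent L)) (C : Set (Fm L)) :
    Sequent L → Prop
  | hyp {s : Sequent L} : s ∈ S → Deriv G S C s
  | ax (φ : Fm L) : Deriv G S C ⟨{φ}, some φ⟩
  | weakL {Γ Γ' : Set (Fm L)} {E : Option (Fm L)} :
      Deriv G S C ⟨Γ, E⟩ → Γ ⊆ Γ' → Deriv G S C ⟨Γ', E⟩
  | weakR {Γ : Set (Fm L)} (ψ : Fm L) :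
      Deriv G S C ⟨Γ, none⟩ → Deriv G S C ⟨Γ, some ψ⟩
  | cut {Γ Δ : Set (Fm L)} {φ : Fm L} {E : Option (Fm L)} :
      φ ∈ C → Deriv G S C ⟨Γ, some φ⟩ → Deriv G S C ⟨insert φ Δ, E⟩ →
      Deriv G S C ⟨Γ ∪ Δ, E⟩
  | right {Γ : Set (Fm L)} (rr : RightRule L) (hr : rr ∈ G.rights)
      (σ : Fin (L.arity rr.conn) → Fm L) :
      (∀ c ∈ rr.prem, Deriv G S C ⟨Γ ∪ σ '' c.lhs, c.rhs.map σ⟩) →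
      Deriv G S C ⟨Γ, some (Fm.conn rr.conn σ)⟩
  | left {Γ : Set (Fm L)} {E : Option (Fm L)} (lr : LeftRule L) (hl : lr ∈ G.lefts)
      (σ : Fin (L.arity lr.conn) → Fm L) :
      (∀ c ∈ lr.hard, Deriv G S C ⟨Γ ∪ σ '' c.lhs, c.rhs.map σ⟩) →
      (∀ t ∈ lr.soft, Deriv G S C ⟨Γ ∪ σ '' t, E⟩) →
      Deriv G S C ⟨insert (Fm.conn lr.conn σ) Γ, E⟩

/-- The set of formulas occurring in some sequent of `S`. -/
def cutFms {L : Lang} (S : Set (Sequent L)) : Set (Fm L) :=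
  {φ | ∃ s ∈ S, φ ∈ s.left ∨ s.right = some φ}

/-- Classical satisfaction of a Horn clause by a two-valued assignment. -/
def Clause.sat {n : ℕ} (v : Fin n → Bool) (c : Clause n) : Prop :=
  (∃ p ∈ c.lhs, v p = false) ∨ (∃ q, c.rhs = some q ∧ v q = true)

/-- Joint classical satisfiability of the premises of a left rule and a right rule. -/
def JointSat {L : Lang} (lr : LeftRule L) (rr : RightRule L)
    (h : L.arity lr.conn = L.arity rr.conn) : Prop :=
  ∃ v : Fin (L.arity lr.conn) → Bool,
    (∀ c ∈ lr.hard, c.sat v) ∧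
    (∀ t ∈ lr.soft, ∃ p ∈ t, v p = false) ∧
    (∀ c ∈ rr.prem, c.sat (fun i => v (Fin.cast h.symm i)))

/-- Coherence: matching left/right rule pairs have jointly unsatisfiable premises. -/
def Coherent {L : Lang} (G : CanSys L) : Prop :=
  ∀ lr ∈ G.lefts, ∀ rr ∈ G.rights, ∀ h : lr.conn = rr.conn,
    ¬ JointSat lr rr (congrArg L.arity h)

section Semantics

variable {L : Lang} {W : Type}

/-- A sequent is locally true at a world. -/
def locT (v : W → Fm L → Bool) (a : W) (s : Sequent L) : Prop :=
  (∃ ψ ∈ s.left, v a ψ = false) ∨ (∃ φ, s.right = some φ ∧ v a φ = true)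

/-- A sequent is (absolutely) true at a world: locally true at all successors. -/
def absT (le : W → W → Prop) (v : W → Fm L → Bool) (a : W) (s : Sequent L) : Prop :=
  ∀ b, le a b → locT v b s

/-- Persistence of a valuation. -/
def PersistentU (le : W → W → Prop) (v : W → Fm L → Bool) : Prop :=
  ∀ (φ : Fm L) (a b : W), le a b → v a φ = true → v b φ = true

/-- A valuation respects a right-introduction rule. -/
def RespR (le : W → W → Prop) (v : W → Fm L → Bool) (rr : RightRule L) : Prop :=
  ∀ (a : W) (σ : Fin (L.arity rr.conn) → Fm L),
    (∀ c ∈ rr.prem, absT le v a (c.seq σ)) → v a (Fm.conn rr.conn σ) = true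

/-- A valuation respects a left-introduction rule. -/
def RespL (le : W → W → Prop) (v : W → Fm L → Bool) (lr : LeftRule L) : Prop :=
  ∀ (a : W) (σ : Fin (L.arity lr.conn) → Fm L),
    (∀ c ∈ lr.hard, absT le v a (c.seq σ)) →
    (∀ t ∈ lr.soft, locT v a ⟨σ '' t, (none : Option (Fm L))⟩) →
    v a (Fm.conn lr.conn σ) = false

/-- A valuation is G-legal: it respects all rules of G. -/
def LegalU (G : CanSys L) (le : W → W → Prop) (v : W → Fm L → Bool) : Prop :=
  (∀ rr ∈ G.rights, RespR le v rr) ∧ (∀ lr ∈ G.lefts, RespL le v lr)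

end Semantics

/-- Semantic consequence: every G-legal frame which is a model of S is a model of s. -/
def SemConseq {L : Lang} (G : CanSys L) (S : Set (Sequent L)) (s : Sequent L) : Prop :=
  ∀ (W : Type) (le : W → W → Prop),
    (∀ a, le a a) → (∀ a b c, le a b → le b c → le a c) →
    (∀ a b, le a b → le b a → a = b) → Nonempty W →
    ∀ v : W → Fm L → Bool, PersistentU le v → LegalU G le v →
      (∀ t ∈ S, ∀ a, locT v a t) → (∀ a, locT v a s)

/-- Auxiliary: from a classically satisfied clause, the instantiated sequent is derivable. -/
lemma clause_deriv {L : Lang} (G : CanSys L) {n : ℕ} (v : Fin n → Bool)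
    (c : Clause n) (hc : c.sat v) (Γ : Set (Fm L)) :
    Deriv G ({⟨∅, some (Fm.atom 0)⟩, ⟨{Fm.atom 1}, none⟩} : Set (Sequent L)) Set.univ
      ⟨Γ ∪ (fun i => if v i then Fm.atom 0 else Fm.atom 1) '' c.lhs,
        c.rhs.map (fun i => if v i then Fm.atom 0 else Fm.atom 1)⟩ := by
  set σ : Fin n → Fm L := fun i => if v i then Fm.atom 0 else Fm.atom 1 with hσ
  rcases hc with ⟨p, hp, hvp⟩ | ⟨q, hq, hvq⟩
  · have h1 : Deriv G ({⟨∅, some (Fm.atom 0)⟩, ⟨{Fm.atom 1}, none⟩} : Set (Sequent L))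
        Set.univ ⟨{Fm.atom 1}, none⟩ := Deriv.hyp (by simp)
    have hsub : ({Fm.atom 1} : Set (Fm L)) ⊆ Γ ∪ σ '' c.lhs := by
      intro x hx
      simp only [Set.mem_singleton_iff] at hx
      subst hx
      right
      exact ⟨p, hp, by simp [hσ, hvp]⟩
    have h2 := Deriv.weakL h1 hsub
    cases hm : c.rhs.map σ with
    | none => exact h2
    | some ψ => exact Deriv.weakR ψ h2
  · rw [hq]
    have h1 : Deriv G ({⟨∅, some (Fm.atom 0)⟩, ⟨{Fm.atom 1}, none⟩} : Set (Sequent L))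
        Set.univ ⟨∅, some (Fm.atom 0)⟩ := Deriv.hyp (by simp)
    have h2 := Deriv.weakL h1 (Set.empty_subset (Γ ∪ σ '' c.lhs))
    simpa [hσ, hvq] using h2

lemma conn_cast {L : Lang} {c1 c2 : L.Conn} (h : c1 = c2) (σ : Fin (L.arity c1) → Fm L) :
    Fm.conn c2 (fun i => σ (Fin.cast (congrArg L.arity h).symm i)) = Fm.conn c1 σ := by
  subst h; rfl

/-- Every strongly consistent canonical system is coherent
(contrapositive form): if G has a matching left/right rule pair with jointly
classically satisfiable premises, then the empty sequent is derivable from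
{ ⇒ p₁, p₂ ⇒ }. -/
theorem incoherent_implies_strongly_inconsistent {L : Lang} (G : CanSys L)
    (lr : LeftRule L) (hl : lr ∈ G.lefts) (rr : RightRule L) (hr : rr ∈ G.rights)
    (h : lr.conn = rr.conn) (hsat : JointSat lr rr (congrArg L.arity h)) :
    Deriv G ({⟨∅, some (Fm.atom 0)⟩, ⟨{Fm.atom 1}, none⟩} : Set (Sequent L))
      Set.univ ⟨∅, none⟩ := by
  obtain ⟨v, hhard, hsoft, hprem⟩ := hsat
  set σ : Fin (L.arity lr.conn) → Fm L := fun i => if v i then Fm.atom 0 else Fm.atom 1 with hσ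
  set S0 : Set (Sequent L) := {⟨∅, some (Fm.atom 0)⟩, ⟨{Fm.atom 1}, none⟩} with hS0
  have dl : Deriv G S0 Set.univ ⟨insert (Fm.conn lr.conn σ) ∅, none⟩ := by
    refine Deriv.left lr hl σ (fun c hc => clause_deriv G v c (hhard c hc) ∅) ?_
    intro t ht
    obtain ⟨p, hp, hvp⟩ := hsoft t ht
    have h1 : Deriv G S0 Set.univ ⟨{Fm.atom 1}, none⟩ := Deriv.hyp (by simp [hS0])
    refine Deriv.weakL h1 ?_
    intro x hx
    simp only [Set.mem_singleton_iff] at hx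
    subst hx
    right
    exact ⟨p, hp, by simp [hσ, hvp]⟩
  have dr : Deriv G S0 Set.univ
      ⟨∅, some (Fm.conn rr.conn (fun i => σ (Fin.cast (congrArg L.arity h).symm i)))⟩ := by
    refine Deriv.right rr hr _ (fun c hc => ?_)
    exact clause_deriv G (fun i => v (Fin.cast (congrArg L.arity h).symm i)) c (hprem c hc) ∅
  rw [conn_cast h σ] at dr
  have := Deriv.cut (Set.mem_univ (Fm.conn lr.conn σ)) dr dl
  simpa using this
end

section
/- Let G be the canonical system over a language with a single unary connective ∘, with rules ⟨∅, {p₁ ⇒}⟩ / ∘p₁ ⇒ and {p₁ ⇒} / ⇒ ∘p₁ (so applications have the forms: from Γ, φ ⇒ E infer Γ, ∘φ ⇒ E; and from Γ, φ ⇒ infer Γ ⇒ ∘φ). Then a sequent Γ ⇒ E is derivable in G from no assumptions if and only if E = {ψ} for some formula ψ such that ∘ⁿψ ∈ Γ for some n ≥ 0 (where ∘⁰ψ = ψ and ∘ⁿ⁺¹ψ = ∘(∘ⁿψ)). In particular, G is consistent but not coherent. -/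
/-- The language with a single unary connective ∘. -/
def L1 : Lang := ⟨Unit, fun _ => 1⟩

/-- The right rule {p₁ ⇒} / ⇒ ∘p₁. -/
def circRight : RightRule L1 := ⟨(), ({⟨{0}, none⟩} : Set (Clause 1))⟩

/-- The left rule ⟨∅, {p₁ ⇒}⟩ / ∘p₁ ⇒. -/
def circLeft : LeftRule L1 := ⟨(), (∅ : Set (Clause 1)), ({{0}} : Set (Set (Fin 1)))⟩

/-- The canonical system G with the two rules for ∘. -/
def Gcirc : CanSys L1 := ⟨{circRight}, {circLeft}⟩

/-- ∘ⁿψ. -/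
def circ : ℕ → Fm L1 → Fm L1
  | 0, ψ => ψ
  | n + 1, ψ => Fm.conn () (fun _ => circ n ψ)

/-! In `Gcirc` the left rule turns `Γ, φ ⇒ E` into `Γ, ∘φ ⇒ E`, while the right rule needs a
premise `Γ, φ ⇒` with empty succedent, which is never derivable. Hence the derivable sequents are
exactly the weakenings of `∘ⁿψ ⇒ ψ`, an invariant that cut preserves because `∘ᵐ(∘ⁿψ) = ∘ᵐ⁺ⁿψ`. -/

theorem circ_add (m n : ℕ) (ψ : Fm L1) : circ (m + n) ψ = circ m (circ n ψ) := by
  induction m with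
  | zero => rw [Nat.zero_add]; rfl
  | succ m ih => rw [Nat.succ_add]; simp only [circ, ih]

theorem conn_eq_circ_succ {σ : Fin 1 → Fm L1} {n : ℕ} {ψ : Fm L1}
    (h : σ 0 = circ n ψ) : Fm.conn () σ = circ (n + 1) ψ := by
  have hσ : σ = fun _ => circ n ψ := funext fun i => Subsingleton.elim (α := Fin 1) i 0 ▸ h
  rw [hσ]
  rfl

theorem circ_atom_ne_atom {i j : ℕ} (hij : i ≠ j) (n : ℕ) :
    circ n (Fm.atom i) ≠ (Fm.atom j : Fm L1) := by
  cases n with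
  | zero => simpa [circ] using hij
  | succ n => simp [circ]

theorem exists_circ_mem_of_deriv {C : Set (Fm L1)} {s : Sequent L1}
    (h : Deriv Gcirc ∅ C s) : ∃ (ψ : Fm L1) (n : ℕ), s.right = some ψ ∧ circ n ψ ∈ s.left := by
  induction h with
  | hyp hs => exact hs.elim
  | ax φ => exact ⟨φ, 0, rfl, rfl⟩
  | weakL _ hsub ih =>
    obtain ⟨ψ, n, hE, hmem⟩ := ih
    exact ⟨ψ, n, hE, hsub hmem⟩
  | weakR _ _ ih =>
    obtain ⟨_, _, hE, _⟩ := ih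
    exact nomatch hE
  | cut _ _ _ ih₁ ih₂ =>
    obtain ⟨_, m, hφ, hm⟩ := ih₁
    obtain ⟨ψ, n, hE, hn⟩ := ih₂
    rcases hn with hcut | hΔ
    · cases Option.some.inj hφ
      exact ⟨ψ, m + n, hE, Or.inl (by rwa [circ_add, hcut])⟩
    · exact ⟨ψ, n, hE, Or.inr hΔ⟩
  | right rr hr _ _ ih =>
    cases (hr : rr = circRight)
    obtain ⟨_, _, hE, _⟩ := ih (⟨{0}, none⟩ : Clause 1) rfl
    exact nomatch hE
  | left lr hl σ _ _ _ ih =>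
    cases (hl : lr = circLeft)
    obtain ⟨ψ, n, hE, hmem⟩ := ih ({0} : Set (Fin 1)) rfl
    rcases hmem with hΓ | ⟨i, rfl, hσ⟩
    · exact ⟨ψ, n, hE, Or.inr hΓ⟩
    · exact ⟨ψ, n + 1, hE, Or.inl (conn_eq_circ_succ hσ).symm⟩

theorem deriv_circ_singleton (C : Set (Fm L1)) (ψ : Fm L1) (n : ℕ) :
    Deriv Gcirc ∅ C ⟨{circ n ψ}, some ψ⟩ := by
  induction n with
  | zero => exact Deriv.ax ψ
  | succ n ih =>
    have h := Deriv.left (G := Gcirc) (Γ := ∅) circLeft rfl (fun _ => circ n ψ)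
      (fun _ h => h.elim) fun t ht => by
        cases (ht : t = ({0} : Set (Fin 1)))
        exact Deriv.weakL ih fun _ hx => Or.inr ⟨(0 : Fin 1), rfl, hx.symm⟩
    rwa [insert_empty_eq] at h

theorem deriv_iff_exists_circ_mem (C : Set (Fm L1)) (Γ : Set (Fm L1)) (E : Option (Fm L1)) :
    Deriv Gcirc ∅ C ⟨Γ, E⟩ ↔ ∃ (ψ : Fm L1) (n : ℕ), E = some ψ ∧ circ n ψ ∈ Γ := by
  refine ⟨exists_circ_mem_of_deriv, ?_⟩
  rintro ⟨ψ, n, rfl, hmem⟩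
  exact Deriv.weakL (deriv_circ_singleton C ψ n) (Set.singleton_subset_iff.2 hmem)

theorem jointSat_circLeft_circRight : JointSat circLeft circRight rfl :=
  ⟨fun _ => false, fun _ h => h.elim,
    fun t ht => by cases (ht : t = ({0} : Set (Fin 1))); exact ⟨(0 : Fin 1), rfl, rfl⟩,
    fun c hc => by
      cases (hc : c = (⟨{0}, none⟩ : Clause 1))
      exact Or.inl ⟨(0 : Fin 1), rfl, rfl⟩⟩

/-- A sequent Γ ⇒ E is derivable in G from no assumptions iff
E = {ψ} with ∘ⁿψ ∈ Γ for some n; in particular G is consistent but not coherent. -/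
theorem circ_system_characterization :
    (∀ (Γ : Set (Fm L1)) (E : Option (Fm L1)),
      Deriv Gcirc ∅ Set.univ ⟨Γ, E⟩ ↔ ∃ (ψ : Fm L1) (n : ℕ), E = some ψ ∧ circ n ψ ∈ Γ) ∧
    ¬ Deriv Gcirc ∅ Set.univ ⟨{Fm.atom 0}, some (Fm.atom 1)⟩ ∧
    ¬ Coherent Gcirc := by
  refine ⟨deriv_iff_exists_circ_mem Set.univ, fun h => ?_,
    fun hC => hC circLeft rfl circRight rfl rfl jointSat_circLeft_circRight⟩
  obtain ⟨ψ, n, hψ, hmem⟩ := (deriv_iff_exists_circ_mem _ _ _).1 h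
  cases Option.some.inj hψ
  exact circ_atom_ne_atom (by decide) n hmem
end

section
/- Soundness: If G is a coherent canonical system and a sequent s is derivable in G from a set of sequents S, then every G-legal L-frame which is a model of S is a model of s. -/
/-- Soundness: if s is derivable in a coherent canonical system G
from S, then every G-legal frame which is a model of S is a model of s. -/
theorem soundness {L : Lang} (G : CanSys L) (hcoh : Coherent G)
    (S : Set (Sequent L)) (s : Sequent L) (hd : Deriv G S Set.univ s) :
    SemConseq G S s := by
  intro W le hrefl htrans hanti hne v hpers hlegal hS
  induction hd with
  | hyp h => exact hS _ h
  | ax φ =>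
    intro a
    by_cases h : v a φ = true
    · exact Or.inr ⟨φ, rfl, h⟩
    · exact Or.inl ⟨φ, rfl, by simpa using h⟩
  | weakL hΓ hsub ih =>
    intro a
    rcases ih a with ⟨ψ, hψ, hf⟩ | h
    · exact Or.inl ⟨ψ, hsub hψ, hf⟩
    · exact Or.inr h
  | weakR ψ hd ih =>
    intro a
    rcases ih a with ⟨ψ', h, hf⟩ | ⟨φ, hφ, _⟩
    · exact Or.inl ⟨ψ', h, hf⟩
    · exact absurd hφ (by simp)
  | @cut Γ Δ φ E hC h1 h2 ih1 ih2 =>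
    intro a
    rcases ih1 a with ⟨ψ, hψ, hf⟩ | ⟨φ', hφ', ht⟩
    · exact Or.inl ⟨ψ, Or.inl hψ, hf⟩
    · have hφeq : φ' = φ := by injection hφ'.symm
      subst hφeq
      rcases ih2 a with ⟨ψ, hψ, hf⟩ | hr
      · rcases hψ with rfl | hψ
        · rw [ht] at hf; exact absurd hf (by simp)
        · exact Or.inl ⟨ψ, Or.inr hψ, hf⟩
      · exact Or.inr hr
  | @right Γ rr hr σ hprem ih =>
    intro a
    by_cases hΓ : ∃ ψ ∈ Γ, v a ψ = false
    · exact Or.inl hΓ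
    · push_neg at hΓ
      have hΓt : ∀ ψ ∈ Γ, v a ψ = true := fun ψ hψ => by
        have := hΓ ψ hψ; revert this; cases v a ψ <;> simp
      refine Or.inr ⟨_, rfl, hlegal.1 rr hr a σ ?_⟩
      intro c hc b hb
      rcases ih c hc b with ⟨ψ, hψ, hf⟩ | hrr
      · rcases hψ with hψ | hψ
        · have := hpers ψ a b hb (hΓt ψ hψ)
          rw [this] at hf; exact absurd hf (by simp)
        · exact Or.inl ⟨ψ, hψ, hf⟩
      · exact Or.inr hrr
  | @left Γ E lr hl σ hhard hsoft ihh ihs =>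
    intro a
    by_cases hΓ : ∃ ψ ∈ Γ, v a ψ = false
    · rcases hΓ with ⟨ψ, hψ, hf⟩
      exact Or.inl ⟨ψ, Set.mem_insert_of_mem _ hψ, hf⟩
    · push_neg at hΓ
      have hΓt : ∀ ψ ∈ Γ, v a ψ = true := fun ψ hψ => by
        have := hΓ ψ hψ; revert this; cases v a ψ <;> simp
      by_cases hE : ∃ φ, E = some φ ∧ v a φ = true
      · exact Or.inr hE
      · refine Or.inl ⟨_, Set.mem_insert _ _, ?_⟩
        have habs : ∀ c ∈ lr.hard, absT le v a (c.seq σ) := by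
          intro c hc b hb
          rcases ihh c hc b with ⟨ψ, hψ, hf⟩ | hrr
          · rcases hψ with hψ | hψ
            · have := hpers ψ a b hb (hΓt ψ hψ)
              rw [this] at hf; exact absurd hf (by simp)
            · exact Or.inl ⟨ψ, hψ, hf⟩
          · exact Or.inr hrr
        have hsoft' : ∀ t ∈ lr.soft,
            locT v a ⟨σ '' t, (none : Option (Fm L))⟩ := by
          intro t ht
          rcases ihs t ht a with ⟨ψ, hψ, hf⟩ | hrr
          · rcases hψ with hψ | hψ
            · rw [hΓt ψ hψ] at hf; exact absurd hf (by simp)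
            · exact Or.inl ⟨ψ, hψ, hf⟩
          · exact absurd hrr hE
        exact hlegal.2 lr hl a σ habs hsoft'
end

section
/- General strong cut-elimination: Every coherent canonical system G admits strong cut-elimination, i.e., whenever a sequent s is derivable in G from a set of sequents S, there exists a derivation of s from S in which every cut formula occurs in some sequent of S. In particular (S = ∅), every sequent provable in G from no assumptions has a cut-free proof. -/
/-! Cut on `φ` is shown admissible, by induction on `φ`, for derivations whose cut formulas occur
in `S`. If `φ` occurs in `S` the cut is allowed. Otherwise the cut is permuted up the derivation of
the premise with `φ` on the left until `φ` is introduced there by a left rule, and then up the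
derivation of the premise with `φ` on the right until `φ` is introduced by a right rule (it cannot
be an assumption, as it does not occur in `S`). There, by coherence, the valuation making true
exactly the immediate subformulas of `φ` derivable from the context falsifies a premise of one of
the two rules; that premise is discharged by cuts on subformulas, admissible by induction. -/

theorem union_sdiff_union_subset {α : Type*} (Γ Δ X : Set α) (φ : α) :
    Γ ∪ (Δ ∪ X) \ {φ} ⊆ Γ ∪ Δ \ {φ} ∪ X := by
  intro x
  simp only [Set.mem_union, Set.mem_sdiff]
  tauto

section CutElimination

variable {L : Lang} {G : CanSys L} {S : Set (Sequent L)} {C : Set (Fm L)}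

theorem Deriv.of_none {Γ : Set (Fm L)} (h : Deriv G S C ⟨Γ, none⟩) :
    ∀ E : Option (Fm L), Deriv G S C ⟨Γ, E⟩
  | none => h
  | some ψ => weakR ψ h

theorem Deriv.of_eq_left {Γ Γ' : Set (Fm L)} {E : Option (Fm L)} (h : Deriv G S C ⟨Γ, E⟩)
    (he : Γ = Γ') : Deriv G S C ⟨Γ', E⟩ :=
  he ▸ h

/-- Phrased with `Δ \ {φ}` for an arbitrary `Δ`, rather than with `insert φ Δ`, so that it can be
proved by induction on the derivation of `Δ ⇒ E`. -/
def CutAdmissible (G : CanSys L) (S : Set (Sequent L)) (C : Set (Fm L)) (φ : Fm L) : Prop :=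
  ∀ ⦃Γ Δ : Set (Fm L)⦄ ⦃E : Option (Fm L)⦄, Deriv G S C ⟨Γ, some φ⟩ → Deriv G S C ⟨Δ, E⟩ →
    Deriv G S C ⟨Γ ∪ Δ \ {φ}, E⟩

theorem cutAdmissible_of_mem {φ : Fm L} (hφ : φ ∈ C) : CutAdmissible G S C φ :=
  fun _ _ _ hΓ hΔ => .cut hφ hΓ (.weakL hΔ (by simp))

theorem Deriv.cut_finite {Θ Φ : Set (Fm L)} {E : Option (Fm L)} (hΦ : Φ.Finite)
    (hadm : ∀ φ ∈ Φ, CutAdmissible G S C φ) (hder : ∀ φ ∈ Φ, Deriv G S C ⟨Θ, some φ⟩)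
    (h : Deriv G S C ⟨Θ ∪ Φ, E⟩) : Deriv G S C ⟨Θ, E⟩ := by
  induction Φ, hΦ using Set.Finite.induction_on with
  | empty => simpa using h
  | @insert φ Φ _ _ ih =>
    have hcut := hadm φ (.inl rfl) (hder φ (.inl rfl)) h
    refine ih (fun ψ hψ => hadm ψ (.inr hψ)) (fun ψ hψ => hder ψ (.inr hψ)) (.weakL hcut ?_)
    intro x
    simp only [Set.mem_union, Set.mem_sdiff, Set.mem_insert_iff, Set.mem_singleton_iff]
    tauto

open scoped Classical in
theorem Deriv.of_not_sat {m : ℕ} {τ : Fin m → Fm L} (hadm : ∀ i, CutAdmissible G S C (τ i))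
    {Θ : Set (Fm L)} {cl : Clause m}
    (hns : ¬ cl.sat fun i => decide (Deriv G S C ⟨Θ, some (τ i)⟩))
    (h : Deriv G S C ⟨Θ ∪ τ '' cl.lhs, cl.rhs.map τ⟩) (E : Option (Fm L)) :
    Deriv G S C ⟨Θ, E⟩ := by
  simp only [Clause.sat, not_or, not_exists, not_and, decide_eq_false_iff_not, not_not,
    decide_eq_true_eq] at hns
  obtain ⟨hlhs, hrhs⟩ := hns
  have hcut := cut_finite (Set.toFinite _) (Set.forall_mem_image.2 fun i _ => hadm i)
    (Set.forall_mem_image.2 hlhs) h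
  cases hq : cl.rhs with
  | none => exact of_none (by simpa [hq] using hcut) E
  | some q => exact absurd (by simpa [hq] using hcut) (hrhs q hq)

theorem Deriv.of_not_jointSat {lr : LeftRule L} {rr : RightRule L}
    {σ : Fin (L.arity lr.conn) → Fm L} {σ' : Fin (L.arity rr.conn) → Fm L}
    (hconn : Fm.conn lr.conn σ = Fm.conn rr.conn σ')
    (hunsat : ∀ h : lr.conn = rr.conn, ¬ JointSat lr rr (congrArg L.arity h))
    (hadm : ∀ i, CutAdmissible G S C (σ i)) {Θ : Set (Fm L)} {E : Option (Fm L)}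
    (hhard : ∀ cl ∈ lr.hard, Deriv G S C ⟨Θ ∪ σ '' cl.lhs, cl.rhs.map σ⟩)
    (hsoft : ∀ t ∈ lr.soft, Deriv G S C ⟨Θ ∪ σ '' t, E⟩)
    (hprem : ∀ cl ∈ rr.prem, Deriv G S C ⟨Θ ∪ σ' '' cl.lhs, cl.rhs.map σ'⟩) :
    Deriv G S C ⟨Θ, E⟩ := by
  classical
  obtain ⟨c, hard, soft⟩ := lr
  obtain ⟨c', prem⟩ := rr
  cases hconn
  set v := fun i => decide (Deriv G S C ⟨Θ, some (σ i)⟩)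
  by_cases hhard_sat : ∀ cl ∈ hard, cl.sat v
  swap
  · push Not at hhard_sat
    obtain ⟨cl, hcl, hns⟩ := hhard_sat
    exact of_not_sat hadm hns (hhard cl hcl) E
  by_cases hsoft_sat : ∀ t ∈ soft, ∃ p ∈ t, v p = false
  swap
  · push Not at hsoft_sat
    obtain ⟨t, ht, hall⟩ := hsoft_sat
    exact cut_finite (Set.toFinite _) (Set.forall_mem_image.2 fun i _ => hadm i)
      (Set.forall_mem_image.2 fun p hp => by simpa [v] using hall p hp) (hsoft t ht)
  have hprem_unsat : ¬ ∀ cl ∈ prem, cl.sat v :=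
    fun hsat => hunsat rfl ⟨v, hhard_sat, hsoft_sat, by simpa using hsat⟩
  push Not at hprem_unsat
  obtain ⟨cl, hcl, hns⟩ := hprem_unsat
  exact of_not_sat hadm hns (hprem cl hcl) E

theorem Deriv.cut_left_principal (hcoh : Coherent G) {lr : LeftRule L} (hl : lr ∈ G.lefts)
    {σ : Fin (L.arity lr.conn) → Fm L} (hφ : Fm.conn lr.conn σ ∉ cutFms S)
    (hadm : ∀ i, CutAdmissible G S C (σ i)) {Δ : Set (Fm L)} {E : Option (Fm L)}
    (hhard : ∀ cl ∈ lr.hard, ∀ Γ, Deriv G S C ⟨Γ, some (Fm.conn lr.conn σ)⟩ →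
      Deriv G S C ⟨Γ ∪ Δ ∪ σ '' cl.lhs, cl.rhs.map σ⟩)
    (hsoft : ∀ t ∈ lr.soft, ∀ Γ, Deriv G S C ⟨Γ, some (Fm.conn lr.conn σ)⟩ →
      Deriv G S C ⟨Γ ∪ Δ ∪ σ '' t, E⟩) :
    ∀ s, Deriv G S C s → s.right = some (Fm.conn lr.conn σ) → Deriv G S C ⟨s.left ∪ Δ, E⟩ := by
  intro s hs
  induction hs with
  | hyp hmem => exact fun hr => absurd ⟨_, hmem, .inr hr⟩ hφ
  | ax ψ =>
    rintro ⟨⟩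
    refine .weakL (.left lr hl σ (fun cl hcl => hhard cl hcl _ (.ax _))
      (fun t ht => hsoft t ht _ (.ax _))) ?_
    simp
  | weakL _ hsub ih => exact fun hr => .weakL (ih hr) (Set.union_subset_union_left _ hsub)
  | weakR _ h => exact fun _ => of_none (.weakL h Set.subset_union_left) E
  | cut hψ h₁ _ _ ih₂ =>
    intro hr
    exact of_eq_left (.cut hψ h₁ (of_eq_left (ih₂ hr) Set.insert_union))
      (Set.union_assoc _ _ _).symm
  | right rr hrr σ' hprem =>
    intro hr
    have hconn : Fm.conn lr.conn σ = Fm.conn rr.conn σ' := (Option.some.inj hr).symm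
    have hder : Deriv G S C ⟨_, some (Fm.conn lr.conn σ)⟩ := hconn ▸ Deriv.right rr hrr σ' hprem
    exact of_not_jointSat hconn (hcoh lr hl rr hrr) hadm (fun cl hcl => hhard cl hcl _ hder)
      (fun t ht => hsoft t ht _ hder)
      (fun cl hcl => .weakL (hprem cl hcl) (Set.union_subset_union_left _ Set.subset_union_left))
  | left lr₂ hl₂ σ₂ hhard₂ _ _ ihsoft₂ =>
    intro hr
    refine of_eq_left (.left lr₂ hl₂ σ₂ (fun cl hcl => .weakL (hhard₂ cl hcl) ?_)
      (fun t ht => of_eq_left (ihsoft₂ t ht hr) (Set.union_right_comm _ _ _))) Set.insert_union.symm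
    exact Set.union_subset_union_left _ Set.subset_union_left

theorem cutAdmissible_of_notMem_cutFms (hcoh : Coherent G) {φ : Fm L} (hφ : φ ∉ cutFms S)
    (hsub : ∀ c (τ : Fin (L.arity c) → Fm L), Fm.conn c τ = φ → ∀ i, CutAdmissible G S C (τ i)) :
    CutAdmissible G S C φ := by
  suffices h : ∀ s, Deriv G S C s → ∀ Γ, Deriv G S C ⟨Γ, some φ⟩ →
      Deriv G S C ⟨Γ ∪ s.left \ {φ}, s.right⟩ from fun Γ _ _ hΓ hΔ => h _ hΔ Γ hΓ
  intro s hs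
  induction hs with
  | hyp hmem =>
    refine fun Γ _ => .weakL (.hyp hmem) fun x hx => .inr ⟨hx, ?_⟩
    rintro rfl
    exact hφ ⟨_, hmem, .inl hx⟩
  | ax ψ =>
    intro Γ hΓ
    by_cases hψ : ψ = φ
    · exact .weakL (hψ ▸ hΓ) (by simp [hψ])
    · exact .weakL (.ax ψ) (by simp [hψ])
  | weakL _ hsub ih =>
    exact fun Γ hΓ => .weakL (ih Γ hΓ)
      (Set.union_subset_union_right _ (Set.sdiff_subset_sdiff_left hsub))
  | weakR ψ _ ih => exact fun Γ hΓ => .weakR ψ (ih Γ hΓ)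
  | @cut _ Γ₂ _ _ hψ _ _ ih₁ ih₂ =>
    intro Γ hΓ
    refine .weakL (.cut (Δ := Γ ∪ Γ₂ \ {φ}) hψ (ih₁ Γ hΓ) (.weakL (ih₂ Γ hΓ) ?_)) ?_ <;>
    · intro x
      simp only [Set.mem_union, Set.mem_sdiff, Set.mem_insert_iff, Set.mem_singleton_iff]
      tauto
  | right rr hrr σ _ ih =>
    exact fun Γ hΓ => .right rr hrr σ fun cl hcl =>
      .weakL (ih cl hcl Γ hΓ) (union_sdiff_union_subset _ _ _ _)
  | left lr hl σ _ _ ihhard ihsoft =>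
    intro Γ hΓ
    have hhard := fun cl hcl Γ hΓ =>
      Deriv.weakL (ihhard cl hcl Γ hΓ) (union_sdiff_union_subset _ _ _ _)
    have hsoft := fun t ht Γ hΓ =>
      Deriv.weakL (ihsoft t ht Γ hΓ) (union_sdiff_union_subset _ _ _ _)
    by_cases hprincipal : Fm.conn lr.conn σ = φ
    · subst hprincipal
      simpa using Deriv.cut_left_principal hcoh hl hφ (hsub _ _ rfl) hhard hsoft _ hΓ rfl
    · refine Deriv.of_eq_left (.left lr hl σ (hhard · · Γ hΓ) (hsoft · · Γ hΓ)) ?_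
      rw [Set.insert_sdiff_of_notMem (t := {φ}) _ hprincipal, Set.union_insert]

theorem cutAdmissible (hcoh : Coherent G) (hC : cutFms S ⊆ C) (φ : Fm L) :
    CutAdmissible G S C φ := by
  classical
  have of_components : ∀ φ, (∀ c (τ : Fin (L.arity c) → Fm L), Fm.conn c τ = φ →
      ∀ i, CutAdmissible G S C (τ i)) → CutAdmissible G S C φ := fun φ hsub =>
    if hφ : φ ∈ cutFms S then cutAdmissible_of_mem (hC hφ)
    else cutAdmissible_of_notMem_cutFms hcoh hφ hsub
  induction φ with
  | atom n => exact of_components _ fun _ _ h => nomatch h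
  | conn c f ih => exact of_components _ fun _ _ h => by cases h; exact ih

theorem Deriv.cut_elim (hcoh : Coherent G) (hC : cutFms S ⊆ C) {C' : Set (Fm L)}
    {s : Sequent L} (h : Deriv G S C' s) : Deriv G S C s := by
  induction h with
  | hyp h => exact .hyp h
  | ax φ => exact .ax φ
  | weakL _ hsub ih => exact .weakL ih hsub
  | weakR ψ _ ih => exact .weakR ψ ih
  | @cut _ _ φ _ _ _ _ ih₁ ih₂ =>
    exact .weakL (cutAdmissible hcoh hC φ ih₁ ih₂)
      (Set.union_subset_union_right _ (Set.sdiff_singleton_subset_iff.2 subset_rfl))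
  | right rr hrr σ _ ih => exact .right rr hrr σ ih
  | left lr hl σ _ _ ihhard ihsoft => exact .left lr hl σ ihhard ihsoft

end CutElimination

/-- Every coherent canonical system admits strong
cut-elimination; in particular, provable sequents have cut-free proofs. -/
theorem strong_cut_elimination {L : Lang} (G : CanSys L) (hcoh : Coherent G) :
    (∀ (S : Set (Sequent L)) (s : Sequent L),
      Deriv G S Set.univ s → Deriv G S (cutFms S) s) ∧
    (∀ s : Sequent L, Deriv G ∅ Set.univ s → Deriv G ∅ ∅ s) :=
  ⟨fun _ _ h => h.cut_elim hcoh subset_rfl,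
    fun _ h => h.cut_elim hcoh (by simp [cutFms])⟩
end

section
/- In a canonical system, no cut-free derivation from no assumptions can prove the sequent p₁ ⇒ p₂ for distinct atoms p₁, p₂. -/
def Fm.IsAtom {L : Lang} : Fm L → Prop
  | .atom _ => True
  | .conn _ _ => False

def Sequent.IsAtomic {L : Lang} (s : Sequent L) : Prop :=
  (∀ φ ∈ s.left, φ.IsAtom) ∧ ∀ φ ∈ s.right, φ.IsAtom

/-- Every rule other than an axiom or a weakening introduces a compound formula, so an atomic
sequent can only come from an axiom `φ ⇒ φ` by weakenings. -/
theorem Deriv.exists_mem_right_mem_left_of_isAtomic {L : Lang} {G : CanSys L} {s : Sequent L}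
    (h : Deriv G ∅ ∅ s) (hs : s.IsAtomic) : ∃ φ ∈ s.right, φ ∈ s.left := by
  induction h with
  | hyp hmem => exact absurd hmem (Set.notMem_empty _)
  | ax φ => exact ⟨φ, rfl, rfl⟩
  | weakL _ hsub ih =>
    obtain ⟨φ, hφ, hmem⟩ := ih ⟨fun ψ hψ => hs.1 ψ (hsub hψ), hs.2⟩
    exact ⟨φ, hφ, hsub hmem⟩
  | weakR _ _ ih =>
    obtain ⟨φ, hφ, -⟩ := ih ⟨hs.1, fun _ hnone => nomatch hnone⟩
    exact nomatch hφ
  | cut hC => exact absurd hC (Set.notMem_empty _)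
  | right rr _ σ => exact (hs.2 (Fm.conn rr.conn σ) rfl).elim
  | left lr _ σ => exact (hs.1 (Fm.conn lr.conn σ) (Set.mem_insert _ _)).elim

/-- In a canonical system, no cut-free derivation from no
assumptions proves p₁ ⇒ p₂ for distinct atoms. -/
theorem no_cutfree_proof_of_atomic_nonaxiom {L : Lang} (G : CanSys L)
    (i j : ℕ) (hij : i ≠ j) :
    ¬ Deriv G ∅ ∅ ⟨{Fm.atom i}, some (Fm.atom j)⟩ := by
  intro h
  have hatomic : (⟨{Fm.atom i}, some (Fm.atom j)⟩ : Sequent L).IsAtomic :=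
    ⟨by rintro _ rfl; trivial, by rintro _ ⟨⟩; trivial⟩
  obtain ⟨φ, hφ, hmem⟩ := h.exists_mem_right_mem_left_of_isAtomic hatomic
  cases Option.some.inj hφ
  exact hij (Fm.atom.inj hmem).symm
end

section
/- Definite proof normalization: Let G be a definite canonical system and let S ∪ {s} be a set of definite sequents (sequents with exactly one formula on the right). If there is a derivation P of s from S in G, then there is a derivation P′ of s from S in which every sequent is definite, and every cut formula in P′ is a cut formula in P. -/
/-- Derivations in which every sequent is definite (right side a singleton),
with cut formulas restricted to `C`. -/
inductive DerivD {L : Lang} (G : CanSys L) (S : Set (Sequent L)) (C : Set (Fm L)) :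
    Set (Fm L) → Fm L → Prop
  | hyp {Γ : Set (Fm L)} {φ : Fm L} :
      (⟨Γ, some φ⟩ : Sequent L) ∈ S → DerivD G S C Γ φ
  | ax (φ : Fm L) : DerivD G S C {φ} φ
  | weakL {Γ Γ' : Set (Fm L)} {φ : Fm L} :
      DerivD G S C Γ φ → Γ ⊆ Γ' → DerivD G S C Γ' φ
  | cut {Γ Δ : Set (Fm L)} {φ θ : Fm L} :
      φ ∈ C → DerivD G S C Γ φ → DerivD G S C (insert φ Δ) θ →
      DerivD G S C (Γ ∪ Δ) θ
  | right {Γ : Set (Fm L)} (rr : RightRule L) (hr : rr ∈ G.rights)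
      (σ : Fin (L.arity rr.conn) → Fm L) :
      (∀ c ∈ rr.prem, c.rhs.isSome = true) →
      (∀ c ∈ rr.prem, ∀ q, c.rhs = some q → DerivD G S C (Γ ∪ σ '' c.lhs) (σ q)) →
      DerivD G S C Γ (Fm.conn rr.conn σ)
  | left {Γ : Set (Fm L)} {θ : Fm L} (lr : LeftRule L) (hl : lr ∈ G.lefts)
      (σ : Fin (L.arity lr.conn) → Fm L) :
      (∀ c ∈ lr.hard, c.rhs.isSome = true) →
      (∀ c ∈ lr.hard, ∀ q, c.rhs = some q → DerivD G S C (Γ ∪ σ '' c.lhs) (σ q)) →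
      (∀ t ∈ lr.soft, DerivD G S C (Γ ∪ σ '' t) θ) →
      DerivD G S C (insert (Fm.conn lr.conn σ) Γ) θ

/-- A canonical system is definite if all premises of right rules and all hard
premises of left rules are definite clauses. -/
def DefiniteSys {L : Lang} (G : CanSys L) : Prop :=
  (∀ rr ∈ G.rights, ∀ c ∈ rr.prem, c.rhs.isSome = true) ∧
  (∀ lr ∈ G.lefts, ∀ c ∈ lr.hard, c.rhs.isSome = true)

theorem definite_aux {L : Lang} (G : CanSys L) (hdef : DefiniteSys G)
    (S : Set (Sequent L)) (hS : ∀ t ∈ S, t.right.isSome = true)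
    (C : Set (Fm L)) : ∀ s : Sequent L, Deriv G S C s →
    ∀ ψ : Fm L, (s.right = none ∨ s.right = some ψ) → DerivD G S C s.left ψ := by
  intro s h
  induction h with
  | @hyp s hs =>
    intro ψ hψ
    rcases hψ with h0 | h0
    · have := hS _ hs; rw [h0] at this; simp at this
    · have : s = ⟨s.left, some ψ⟩ := by cases s; simp_all
      exact DerivD.hyp (this ▸ hs)
  | ax φ =>
    intro ψ hψ
    rcases hψ with h0 | h0
    · simp at h0
    · simp only [Option.some.injEq] at h0
      subst h0; exact DerivD.ax φ
  | @weakL Γ Γ' E _ hsub ih =>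
    intro ψ hψ
    exact DerivD.weakL (ih ψ hψ) hsub
  | @weakR Γ ψ0 _ ih =>
    intro ψ hψ
    exact ih ψ (Or.inl rfl)
  | @cut Γ Δ φ E hC _ _ ih1 ih2 =>
    intro ψ hψ
    exact DerivD.cut hC (ih1 φ (Or.inr rfl)) (ih2 ψ hψ)
  | @right Γ rr hr σ _ ih =>
    intro ψ hψ
    rcases hψ with h0 | h0
    · simp at h0
    · simp only [Option.some.injEq] at h0
      subst h0
      refine DerivD.right rr hr σ (hdef.1 rr hr) ?_
      intro c hc q hq
      have := ih c hc (σ q) (Or.inr (by rw [hq]; rfl))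
      exact this
  | @left Γ E lr hl σ _ _ ih1 ih2 =>
    intro ψ hψ
    refine DerivD.left lr hl σ (hdef.2 lr hl) ?_ ?_
    · intro c hc q hq
      exact ih1 c hc (σ q) (Or.inr (by rw [hq]; rfl))
    · intro t ht
      exact ih2 t ht ψ hψ

/-- In a definite canonical system, any derivation of a definite
sequent from definite assumptions can be turned into one consisting only of
definite sequents, using no new cut formulas. -/
theorem definite_normalization {L : Lang} (G : CanSys L) (hdef : DefiniteSys G)
    (S : Set (Sequent L)) (hS : ∀ t ∈ S, t.right.isSome = true)
    (C : Set (Fm L)) (Γ : Set (Fm L)) (φ : Fm L)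
    (h : Deriv G S C ⟨Γ, some φ⟩) :
    DerivD G S C Γ φ :=
  definite_aux G hdef S hS C ⟨Γ, some φ⟩ h φ (Or.inr rfl)
end

section
/- Analycity of the semantics: Let G be a coherent canonical system, and let U₁ ⊆ U₂ be sets of formulas closed under subformulas. If ⟨W, ≤, v₁⟩ is a G-legal U₁-semiframe, then v₁ extends to v₂ : W × U₂ → {t,f} such that ⟨W, ≤, v₂⟩ is a G-legal U₂-semiframe. -/
section Analycity

variable {L : Lang} {W : Type}

/-- A set of formulas closed under subformulas. -/
def SubClosed (U : Set (Fm L)) : Prop :=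
  ∀ (c : L.Conn) (σ : Fin (L.arity c) → Fm L), Fm.conn c σ ∈ U → ∀ i, σ i ∈ U

/-- Persistence restricted to formulas of U. -/
def PersistentOn (U : Set (Fm L)) (le : W → W → Prop) (v : W → Fm L → Bool) : Prop :=
  ∀ φ ∈ U, ∀ a b : W, le a b → v a φ = true → v b φ = true

/-- A valuation respects a right rule on U. -/
def RespROn (U : Set (Fm L)) (le : W → W → Prop) (v : W → Fm L → Bool)
    (rr : RightRule L) : Prop :=
  ∀ (a : W) (σ : Fin (L.arity rr.conn) → Fm L), Fm.conn rr.conn σ ∈ U →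
    (∀ c ∈ rr.prem, absT le v a (c.seq σ)) → v a (Fm.conn rr.conn σ) = true

/-- A valuation respects a left rule on U. -/
def RespLOn (U : Set (Fm L)) (le : W → W → Prop) (v : W → Fm L → Bool)
    (lr : LeftRule L) : Prop :=
  ∀ (a : W) (σ : Fin (L.arity lr.conn) → Fm L), Fm.conn lr.conn σ ∈ U →
    (∀ c ∈ lr.hard, absT le v a (c.seq σ)) →
    (∀ t ∈ lr.soft, locT v a ⟨σ '' t, (none : Option (Fm L))⟩) →
    v a (Fm.conn lr.conn σ) = false

/-- G-legality on U. -/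
def LegalOn (U : Set (Fm L)) (G : CanSys L) (le : W → W → Prop)
    (v : W → Fm L → Bool) : Prop :=
  (∀ rr ∈ G.rights, RespROn U le v rr) ∧ (∀ lr ∈ G.lefts, RespLOn U le v lr)

end Analycity

open Classical in
/-- The canonical extension of a valuation `v1` given on `U1`. -/
noncomputable def extv {L : Lang} {W : Type} (G : CanSys L) (U1 : Set (Fm L))
    (le : W → W → Prop) (v1 : W → Fm L → Bool) : Fm L → W → Bool
  | .atom n => fun a => if Fm.atom n ∈ U1 then v1 a (.atom n) else false
  | .conn c σ => fun a =>
      if Fm.conn c σ ∈ U1 then v1 a (.conn c σ)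
      else decide (∃ rr : RightRule L, rr ∈ G.rights ∧ ∃ h : rr.conn = c,
        ∀ cl ∈ rr.prem, ∀ b, le a b →
          ((∃ p ∈ cl.lhs, extv G U1 le v1 (σ (Fin.cast (congrArg L.arity h) p)) b = false) ∨
           (∃ q, cl.rhs = some q ∧
              extv G U1 le v1 (σ (Fin.cast (congrArg L.arity h) q)) b = true)))

lemma extv_agree {L : Lang} {W : Type} (G : CanSys L) (U1 : Set (Fm L))
    (le : W → W → Prop) (v1 : W → Fm L → Bool) (φ : Fm L) (hφ : φ ∈ U1) (a : W) :
    extv G U1 le v1 φ a = v1 a φ := by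
  cases φ with
  | atom n => rw [extv]; simp [hφ]
  | conn c σ => rw [extv]; simp [hφ]

lemma extv_conn_iff {L : Lang} {W : Type} (G : CanSys L) (U1 : Set (Fm L))
    (le : W → W → Prop) (v1 : W → Fm L → Bool) (c : L.Conn)
    (σ : Fin (L.arity c) → Fm L) (hφ : Fm.conn c σ ∉ U1) (a : W) :
    extv G U1 le v1 (Fm.conn c σ) a = true ↔
      (∃ rr : RightRule L, rr ∈ G.rights ∧ ∃ h : rr.conn = c,
        ∀ cl ∈ rr.prem, ∀ b, le a b →
          ((∃ p ∈ cl.lhs, extv G U1 le v1 (σ (Fin.cast (congrArg L.arity h) p)) b = false) ∨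
           (∃ q, cl.rhs = some q ∧
              extv G U1 le v1 (σ (Fin.cast (congrArg L.arity h) q)) b = true))) := by
  rw [extv]; simp [hφ]

/-- Analycity: a G-legal U₁-semiframe extends to a G-legal
U₂-semiframe for any subformula-closed U₁ ⊆ U₂. -/
theorem analycity {L : Lang} (G : CanSys L) (hcoh : Coherent G)
    (U1 U2 : Set (Fm L)) (h1 : SubClosed U1) (h2 : SubClosed U2) (h12 : U1 ⊆ U2)
    (W : Type) (le : W → W → Prop)
    (hrefl : ∀ a, le a a) (htrans : ∀ a b c, le a b → le b c → le a c)
    (hanti : ∀ a b, le a b → le b a → a = b) (hne : Nonempty W)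
    (v1 : W → Fm L → Bool)
    (hpers : PersistentOn U1 le v1) (hleg : LegalOn U1 G le v1) :
    ∃ v2 : W → Fm L → Bool,
      (∀ a : W, ∀ φ ∈ U1, v2 a φ = v1 a φ) ∧
      PersistentOn U2 le v2 ∧ LegalOn U2 G le v2 := by
  classical
  refine ⟨fun a φ => extv G U1 le v1 φ a, fun a φ hφ => extv_agree G U1 le v1 φ hφ a, ?_, ?_, ?_⟩
  · -- persistence
    intro φ _ a b hab hva
    dsimp only at hva ⊢
    cases φ with
    | atom n =>
      by_cases h : Fm.atom n ∈ U1
      · rw [extv_agree _ _ _ _ _ h] at hva ⊢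
        exact hpers _ h a b hab hva
      · rw [extv] at hva; simp [h] at hva
    | conn c σ =>
      by_cases h : Fm.conn c σ ∈ U1
      · rw [extv_agree _ _ _ _ _ h] at hva ⊢
        exact hpers _ h a b hab hva
      · obtain ⟨rr, hrr, hc, hp⟩ := (extv_conn_iff G U1 le v1 c σ h a).mp hva
        exact (extv_conn_iff G U1 le v1 c σ h b).mpr
          ⟨rr, hrr, hc, fun cl hcl b' hb' => hp cl hcl b' (htrans a b b' hab hb')⟩
  · -- right rules
    intro rr hrr a σ _ hprem
    dsimp only
    by_cases hU1 : Fm.conn rr.conn σ ∈ U1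
    · have hsub : ∀ i, σ i ∈ U1 := h1 _ _ hU1
      rw [extv_agree _ _ _ _ _ hU1]
      refine hleg.1 rr hrr a σ hU1 ?_
      intro cl hcl b hb
      rcases hprem cl hcl b hb with ⟨ψ, hψ, hv⟩ | ⟨φ', hφ', hv⟩
      · obtain ⟨p, hp, rfl⟩ := hψ
        exact Or.inl ⟨σ p, ⟨p, hp, rfl⟩, by rw [← extv_agree G U1 le v1 _ (hsub p) b]; exact hv⟩
      · obtain ⟨q, hq, rfl⟩ := Option.map_eq_some_iff.mp hφ'
        exact Or.inr ⟨σ q, by simp [Clause.seq, hq],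
          by rw [← extv_agree G U1 le v1 _ (hsub q) b]; exact hv⟩
    · refine (extv_conn_iff G U1 le v1 rr.conn σ hU1 a).mpr ⟨rr, hrr, rfl, ?_⟩
      intro cl hcl b hb
      rcases hprem cl hcl b hb with ⟨ψ, hψ, hv⟩ | ⟨φ', hφ', hv⟩
      · obtain ⟨p, hp, rfl⟩ := hψ
        exact Or.inl ⟨p, hp, by simpa using hv⟩
      · obtain ⟨q, hq, rfl⟩ := Option.map_eq_some_iff.mp hφ'
        exact Or.inr ⟨q, hq, by simpa using hv⟩
  · -- left rules
    intro lr hlr a σ _ hhard hsoft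
    dsimp only
    by_cases hU1 : Fm.conn lr.conn σ ∈ U1
    · have hsub : ∀ i, σ i ∈ U1 := h1 _ _ hU1
      rw [extv_agree _ _ _ _ _ hU1]
      refine hleg.2 lr hlr a σ hU1 ?_ ?_
      · intro cl hcl b hb
        rcases hhard cl hcl b hb with ⟨ψ, hψ, hv⟩ | ⟨φ', hφ', hv⟩
        · obtain ⟨p, hp, rfl⟩ := hψ
          exact Or.inl ⟨σ p, ⟨p, hp, rfl⟩, by rw [← extv_agree G U1 le v1 _ (hsub p) b]; exact hv⟩
        · obtain ⟨q, hq, rfl⟩ := Option.map_eq_some_iff.mp hφ'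
          exact Or.inr ⟨σ q, by simp [Clause.seq, hq],
            by rw [← extv_agree G U1 le v1 _ (hsub q) b]; exact hv⟩
      · intro t ht
        rcases hsoft t ht with ⟨ψ, hψ, hv⟩ | ⟨φ', hφ', _⟩
        · obtain ⟨p, hp, rfl⟩ := hψ
          exact Or.inl ⟨σ p, ⟨p, hp, rfl⟩, by rw [← extv_agree G U1 le v1 _ (hsub p) a]; exact hv⟩
        · exact absurd hφ' (by simp)
    · rw [← Bool.not_eq_true]
      intro hb
      obtain ⟨rr, hrr, hc, hp⟩ := (extv_conn_iff G U1 le v1 lr.conn σ hU1 a).mp hb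
      refine hcoh lr hlr rr hrr hc.symm ⟨fun i => extv G U1 le v1 (σ i) a, ?_, ?_, ?_⟩
      · intro cl hcl
        rcases hhard cl hcl a (hrefl a) with ⟨ψ, hψ, hv⟩ | ⟨φ', hφ', hv⟩
        · obtain ⟨p, hhp, rfl⟩ := hψ
          exact Or.inl ⟨p, hhp, hv⟩
        · obtain ⟨q, hq, rfl⟩ := Option.map_eq_some_iff.mp hφ'
          exact Or.inr ⟨q, hq, hv⟩
      · intro t ht
        rcases hsoft t ht with ⟨ψ, hψ, hv⟩ | ⟨φ', hφ', _⟩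
        · obtain ⟨p, hhp, rfl⟩ := hψ
          exact ⟨p, hhp, hv⟩
        · exact absurd hφ' (by simp)
      · intro cl hcl
        rcases hp cl hcl a (hrefl a) with ⟨p, hhp, hv⟩ | ⟨q, hq, hv⟩
        · exact Or.inl ⟨p, hhp, hv⟩
        · exact Or.inr ⟨q, hq, hv⟩
end

section
/- Conservativity: Let G₁ be a coherent canonical system in language L₁, and let G₂ be a coherent canonical system in an extension L₂ of L₁ obtained from G₁ by adding canonical rules only for connectives in L₂ \ L₁. Then G₂ is a conservative extension of G₁: for any set of sequents S ∪ {s} all in the language L₁, s is derivable from S in G₁ if and only if s is derivable from S in G₂. -/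
/-- A formula lies in the sublanguage generated by the connectives in K. -/
def Fm.inK {L : Lang} (K : Set L.Conn) : Fm L → Prop
  | .atom _ => True
  | .conn c f => c ∈ K ∧ ∀ i, (f i).inK K

/-- A sequent lies in the sublanguage generated by K. -/
def Sequent.inK {L : Lang} (K : Set L.Conn) (s : Sequent L) : Prop :=
  (∀ φ ∈ s.left, φ.inK K) ∧ (∀ φ : Fm L, s.right = some φ → φ.inK K)

/-!
A `G₂`-derivation is interpreted in a phase-style model built from `G₁`-provability. A context
`Δ` (a set of formulas) supports a formula of the `K`-language when it contains it, and supports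
a formula with a new connective when it lies in that formula's interpretation: the closure of the
contexts that force all premises of some `G₂` right rule for its connective. The right-hand side
of a sequent holds at `Δ` when `G₁` proves it from `Δ`, or, for a formula with a new connective,
when `Δ` lies in its interpretation. Every rule of `G₂` preserves validity in this model. For a
left rule of a new connective, take a context forcing the premises of a right rule for the same
connective: unless it proves the empty sequent, the formulas it forces define a classical
valuation satisfying the premises of both rules, so coherence of `G₂` leaves a soft premise all
of whose formulas are forced. On sequents of the `K`-language validity is `G₁`-derivability.
-/

theorem Deriv.mono_rules {L : Lang} {G1 G2 : CanSys L} {S : Set (Sequent L)} {C : Set (Fm L)}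
    (hR : G1.rights ⊆ G2.rights) (hL : G1.lefts ⊆ G2.lefts) {t : Sequent L}
    (h : Deriv G1 S C t) : Deriv G2 S C t := by
  induction h with
  | hyp hs => exact .hyp hs
  | ax φ => exact .ax φ
  | weakL _ hsub ih => exact .weakL ih hsub
  | weakR ψ _ ih => exact .weakR ψ ih
  | cut hφ _ _ ih₁ ih₂ => exact .cut hφ ih₁ ih₂
  | right rr hr σ _ ih => exact .right rr (hR hr) σ ih
  | left lr hl σ _ _ ihh ihs => exact .left lr (hL hl) σ ihh ihs

theorem Clause.sat_of_imp {n : ℕ} {c : Clause n} (v : Fin n → Bool)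
    (h : (∀ p ∈ c.lhs, v p = true) → ∃ q, c.rhs = some q ∧ v q = true) : c.sat v := by
  by_cases hc : ∀ p ∈ c.lhs, v p = true
  · exact .inr (h hc)
  · obtain ⟨p, hp, hvp⟩ := not_forall₂.mp hc
    exact .inl ⟨p, hp, Bool.eq_false_iff.mpr hvp⟩

namespace PhaseModel

variable {L : Lang}

section Closure

variable (G : CanSys L) (S : Set (Sequent L))

def Provable (Γ : Set (Fm L)) (E : Option (Fm L)) : Prop :=
  Deriv G S Set.univ ⟨Γ, E⟩

/-- The bi-orthogonal closure of phase semantics, with `Provable (· ∪ Θ) F` as orthogonality. -/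
def phaseClosure (B : Set (Set (Fm L))) : Set (Set (Fm L)) :=
  {Δ | ∀ Θ F, (∀ Δ' ∈ B, Provable G S (Δ' ∪ Θ) F) → Provable G S (Δ ∪ Θ) F}

def IsPhaseClosed (X : Set (Set (Fm L))) : Prop :=
  phaseClosure G S X ⊆ X

variable {G S}

theorem Provable.mono {Γ Γ' : Set (Fm L)} {E : Option (Fm L)} (h : Provable G S Γ E)
    (hsub : Γ ⊆ Γ') : Provable G S Γ' E :=
  Deriv.weakL h hsub

theorem Provable.of_none {Γ : Set (Fm L)} (h : Provable G S Γ none) (E : Option (Fm L)) :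
    Provable G S Γ E := by
  cases E with
  | none => exact h
  | some ψ => exact Deriv.weakR ψ h

theorem subset_phaseClosure (B : Set (Set (Fm L))) : B ⊆ phaseClosure G S B :=
  fun Δ hΔ _ _ h => h Δ hΔ

theorem isPhaseClosed_phaseClosure (B : Set (Set (Fm L))) :
    IsPhaseClosed G S (phaseClosure G S B) :=
  fun _ hΔ Θ F hB => hΔ Θ F fun _ hΔ' => hΔ' Θ F hB

theorem isPhaseClosed_provable (E : Option (Fm L)) :
    IsPhaseClosed G S {Δ | Provable G S Δ E} := fun Δ hΔ => by
  simpa using hΔ ∅ E fun Δ' h => by simpa using h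

namespace IsPhaseClosed

variable {X : Set (Set (Fm L))} {Δ : Set (Fm L)}

theorem mem_of_provable_imp (hX : IsPhaseClosed G S X) {Δ' : Set (Fm L)} (hΔ' : Δ' ∈ X)
    (h : ∀ Θ F, Provable G S (Δ' ∪ Θ) F → Provable G S (Δ ∪ Θ) F) : Δ ∈ X :=
  hX fun Θ F hB => h Θ F (hB Δ' hΔ')

theorem mono (hX : IsPhaseClosed G S X) (hΔ : Δ ∈ X) {Δ' : Set (Fm L)} (hsub : Δ ⊆ Δ') :
    Δ' ∈ X :=
  hX.mem_of_provable_imp hΔ fun _ _ h => h.mono (Set.union_subset_union_left _ hsub)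

theorem mem_of_provable_none (hX : IsPhaseClosed G S X) (h : Provable G S Δ none) : Δ ∈ X :=
  hX fun _ F _ => (h.mono Set.subset_union_left).of_none F

theorem mem_of_insert_mem (hX : IsPhaseClosed G S X) {φ : Fm L} (hins : insert φ Δ ∈ X)
    (hφ : Provable G S Δ (some φ)) : Δ ∈ X :=
  hX.mem_of_provable_imp hins fun Θ _ h => by
    rw [Set.insert_union] at h
    have h' := Deriv.cut (Set.mem_univ φ) (hφ.mono (Set.subset_union_left (t := Θ))) h
    rwa [Set.union_self] at h'

theorem mem_of_mem_phaseClosure (hX : IsPhaseClosed G S X) {B : Set (Set (Fm L))}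
    (hΔ : Δ ∈ phaseClosure G S B) (h : ∀ Δ' ∈ B, Δ' ∪ Δ ∈ X) : Δ ∈ X :=
  hX fun Θ F hX' => by
    have := hΔ (Δ ∪ Θ) F fun Δ' hΔ' => by
      rw [← Set.union_assoc]
      exact hX' _ (h Δ' hΔ')
    rwa [← Set.union_assoc, Set.union_self] at this

theorem insert_conn_mem (hX : IsPhaseClosed G S X) {lr : LeftRule L} (hl : lr ∈ G.lefts)
    {σ : Fin (L.arity lr.conn) → Fm L}
    (hhard : ∀ c ∈ lr.hard, Provable G S (Δ ∪ σ '' c.lhs) (c.rhs.map σ))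
    (hsoft : ∀ t ∈ lr.soft, Δ ∪ σ '' t ∈ X) : insert (Fm.conn lr.conn σ) Δ ∈ X :=
  hX fun Θ F hX' => by
    rw [Set.insert_union]
    exact Deriv.left lr hl σ
      (fun c hc => (hhard c hc).mono (Set.union_subset_union_left _ Set.subset_union_left))
      (fun t ht => (hX' _ (hsoft t ht)).mono (Set.union_right_comm _ _ _).subset)

end IsPhaseClosed

end Closure

section Model

variable (G1 : CanSys L) (S : Set (Sequent L)) (G2 : CanSys L) (K : Set L.Conn)

open Classical in
/-- `suppWith` and `forcesWith` take the interpretation of the formulas involved as a parameter,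
so that `interp` can be defined by structural recursion. -/
def suppWith (I : Set (Set (Fm L))) (φ : Fm L) : Set (Set (Fm L)) :=
  if φ.inK K then {Δ | φ ∈ Δ} else I

def forcesWith {n : ℕ} (I : Fin n → Set (Set (Fm L))) (g : Fin n → Fm L) (c : Clause n) :
    Set (Set (Fm L)) :=
  {Ξ | ∀ Ξ', Ξ ⊆ Ξ' → (∀ p ∈ c.lhs, Ξ' ∈ suppWith K (I p) (g p)) →
    Ξ' ∈ c.rhs.elim {Δ | Provable G1 S Δ none} I}

def rightSupport (c : L.Conn) (f : Fin (L.arity c) → Fm L)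
    (I : Fin (L.arity c) → Set (Set (Fm L))) : Set (Set (Fm L)) :=
  ⋃ rr ∈ G2.rights, ⋃ e : rr.conn = c, ⋂ cl ∈ rr.prem,
    forcesWith G1 S K (I ∘ Fin.cast (congrArg L.arity e)) (f ∘ Fin.cast (congrArg L.arity e)) cl

open Classical in
def interp : Fm L → Set (Set (Fm L))
  | φ@(.atom _) => {Δ | Provable G1 S Δ (some φ)}
  | φ@(.conn c f) =>
    if φ.inK K then {Δ | Provable G1 S Δ (some φ)}
    else phaseClosure G1 S (rightSupport G1 S G2 K c f fun i => interp (f i))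

def supp (φ : Fm L) : Set (Set (Fm L)) :=
  suppWith K (interp G1 S G2 K φ) φ

def target : Option (Fm L) → Set (Set (Fm L))
  | none => {Δ | Provable G1 S Δ none}
  | some φ => interp G1 S G2 K φ

def Supports (Δ Γ : Set (Fm L)) : Prop :=
  ∀ φ ∈ Γ, Δ ∈ supp G1 S G2 K φ

def Valid (t : Sequent L) : Prop :=
  ∀ Δ, Supports G1 S G2 K Δ t.left → Δ ∈ target G1 S G2 K t.right

def Forces (Ξ : Set (Fm L)) {n : ℕ} (g : Fin n → Fm L) (c : Clause n) : Prop :=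
  ∀ Ξ', Ξ ⊆ Ξ' → Supports G1 S G2 K Ξ' (g '' c.lhs) → Ξ' ∈ target G1 S G2 K (c.rhs.map g)

variable {G1 S G2 K}

theorem interp_of_inK {φ : Fm L} (h : φ.inK K) :
    interp G1 S G2 K φ = {Δ | Provable G1 S Δ (some φ)} := by
  cases φ <;> simp [interp, h]

theorem interp_conn_of_not_inK {c : L.Conn} {f : Fin (L.arity c) → Fm L}
    (h : ¬ (Fm.conn c f).inK K) :
    interp G1 S G2 K (.conn c f) =
      phaseClosure G1 S (rightSupport G1 S G2 K c f fun i => interp G1 S G2 K (f i)) := by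
  simp [interp, h]

theorem supp_of_inK {φ : Fm L} (h : φ.inK K) : supp G1 S G2 K φ = {Δ | φ ∈ Δ} := by
  simp [supp, suppWith, h]

theorem supp_of_not_inK {φ : Fm L} (h : ¬ φ.inK K) : supp G1 S G2 K φ = interp G1 S G2 K φ := by
  simp [supp, suppWith, h]

theorem mem_rightSupport {c : L.Conn} {f : Fin (L.arity c) → Fm L} {Ξ : Set (Fm L)} :
    Ξ ∈ rightSupport G1 S G2 K c f (fun i => interp G1 S G2 K (f i)) ↔
      ∃ rr ∈ G2.rights, ∃ e : rr.conn = c,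
        ∀ cl ∈ rr.prem, Forces G1 S G2 K Ξ (f ∘ Fin.cast (congrArg L.arity e)) cl := by
  have hforces : ∀ {n} (g : Fin n → Fm L) (cl : Clause n),
      Ξ ∈ forcesWith G1 S K (interp G1 S G2 K ∘ g) g cl ↔ Forces G1 S G2 K Ξ g cl := by
    intro n g cl
    simp only [forcesWith, Forces, Supports, Set.forall_mem_image]
    cases cl.rhs <;> rfl
  simp only [rightSupport, Set.mem_iUnion, Set.mem_iInter, exists_prop]
  exact exists_congr fun rr => and_congr_right fun _ => exists_congr fun e =>
    forall₂_congr fun cl _ => hforces _ cl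

theorem isPhaseClosed_interp (φ : Fm L) : IsPhaseClosed G1 S (interp G1 S G2 K φ) := by
  by_cases h : φ.inK K
  · rw [interp_of_inK h]
    exact isPhaseClosed_provable _
  · cases φ with
    | atom => exact absurd trivial h
    | conn c f =>
      rw [interp_conn_of_not_inK h]
      exact isPhaseClosed_phaseClosure _

theorem isPhaseClosed_target (E : Option (Fm L)) : IsPhaseClosed G1 S (target G1 S G2 K E) := by
  cases E with
  | none => exact isPhaseClosed_provable none
  | some φ => exact isPhaseClosed_interp φ

theorem target_eq_of_inK {E : Option (Fm L)} (hE : ∀ φ, E = some φ → φ.inK K) :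
    target G1 S G2 K E = {Δ | Provable G1 S Δ E} := by
  cases E with
  | none => rfl
  | some φ => exact interp_of_inK (hE φ rfl)

theorem supp_subset_interp (φ : Fm L) : supp G1 S G2 K φ ⊆ interp G1 S G2 K φ := by
  by_cases h : φ.inK K
  · rw [supp_of_inK h, interp_of_inK h]
    exact fun Δ hφ => Deriv.weakL (Deriv.ax φ) (Set.singleton_subset_iff.mpr hφ)
  · rw [supp_of_not_inK h]

theorem supp_mono {φ : Fm L} {Δ Δ' : Set (Fm L)} (h : Δ ∈ supp G1 S G2 K φ) (hsub : Δ ⊆ Δ') :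
    Δ' ∈ supp G1 S G2 K φ := by
  by_cases hφ : φ.inK K
  · rw [supp_of_inK hφ] at h ⊢
    exact hsub h
  · rw [supp_of_not_inK hφ] at h ⊢
    exact (isPhaseClosed_interp φ).mono h hsub

theorem Supports.mono {Δ Δ' Γ : Set (Fm L)} (h : Supports G1 S G2 K Δ Γ) (hsub : Δ ⊆ Δ') :
    Supports G1 S G2 K Δ' Γ :=
  fun φ hφ => supp_mono (h φ hφ) hsub

theorem Supports.union {Δ Γ Γ' : Set (Fm L)} (h : Supports G1 S G2 K Δ Γ)
    (h' : Supports G1 S G2 K Δ Γ') : Supports G1 S G2 K Δ (Γ ∪ Γ') :=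
  fun φ hφ => hφ.elim (h φ) (h' φ)

theorem supports_of_subset {Δ Γ : Set (Fm L)} (hΓ : ∀ φ ∈ Γ, φ.inK K) (hsub : Γ ⊆ Δ) :
    Supports G1 S G2 K Δ Γ :=
  fun φ hφ => by
    rw [supp_of_inK (hΓ φ hφ)]
    exact hsub hφ

theorem Supports.union_image {Δ Γ : Set (Fm L)} (h : Supports G1 S G2 K Δ Γ) {n : ℕ}
    {σ : Fin n → Fm L} (hσ : ∀ i, (σ i).inK K) (A : Set (Fin n)) :
    Supports G1 S G2 K (Δ ∪ σ '' A) (Γ ∪ σ '' A) :=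
  (h.mono Set.subset_union_left).union
    (supports_of_subset (Set.forall_mem_image.mpr fun i _ => hσ i) Set.subset_union_right)

theorem Forces.mono {Ξ Ξ' : Set (Fm L)} {n : ℕ} {g : Fin n → Fm L} {c : Clause n}
    (h : Forces G1 S G2 K Ξ g c) (hsub : Ξ ⊆ Ξ') : Forces G1 S G2 K Ξ' g c :=
  fun Ξ'' h' => h Ξ'' (hsub.trans h')

/-- Semantic cut: a `G₁`-cut for a formula of the `K`-language; for any other formula,
supporting it and lying in its interpretation coincide. -/
theorem IsPhaseClosed.mem_of_mem_interp {X : Set (Set (Fm L))} (hX : IsPhaseClosed G1 S X)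
    {φ : Fm L} {Δ : Set (Fm L)} (hφ : Δ ∈ interp G1 S G2 K φ)
    (h : ∀ Δ', Δ ⊆ Δ' → Δ' ∈ supp G1 S G2 K φ → Δ' ∈ X) : Δ ∈ X := by
  by_cases hK : φ.inK K
  · rw [interp_of_inK hK] at hφ
    refine hX.mem_of_insert_mem (h _ (Set.subset_insert φ Δ) ?_) hφ
    rw [supp_of_inK hK]
    exact Set.mem_insert φ Δ
  · exact h Δ subset_rfl (by rwa [supp_of_not_inK hK])

theorem IsPhaseClosed.mem_of_supports {X : Set (Set (Fm L))} (hX : IsPhaseClosed G1 S X)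
    {Φ : Set (Fm L)} (hΦ : Φ.Finite) {Δ : Set (Fm L)}
    (hint : ∀ φ ∈ Φ, Δ ∈ interp G1 S G2 K φ)
    (h : ∀ Δ', Δ ⊆ Δ' → Supports G1 S G2 K Δ' Φ → Δ' ∈ X) : Δ ∈ X := by
  induction Φ, hΦ using Set.Finite.induction_on with
  | empty => exact h Δ subset_rfl fun _ h => h.elim
  | @insert a Φ _ _ ih =>
    refine ih (fun φ hφ => hint φ (Set.mem_insert_of_mem a hφ)) fun Δ' hΔ' hΦ' => ?_
    refine hX.mem_of_mem_interp ((isPhaseClosed_interp a).mono (hint a (Set.mem_insert a Φ)) hΔ')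
      fun Δ'' hΔ'' ha => h Δ'' (hΔ'.trans hΔ'') ?_
    exact Set.forall_mem_insert.mpr ⟨ha, (hΦ'.mono hΔ'')⟩

theorem Valid.mem_target {Γ Φ : Set (Fm L)} {E : Option (Fm L)}
    (hv : Valid G1 S G2 K ⟨Γ ∪ Φ, E⟩) {Ξ : Set (Fm L)} (hΓ : Supports G1 S G2 K Ξ Γ)
    (hΦ : Φ.Finite) (hint : ∀ φ ∈ Φ, Ξ ∈ interp G1 S G2 K φ) : Ξ ∈ target G1 S G2 K E :=
  (isPhaseClosed_target E).mem_of_supports hΦ hint fun Δ' hΔ' hs => hv Δ' ((hΓ.mono hΔ').union hs)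

theorem Forces.mem_target {Ξ : Set (Fm L)} {n : ℕ} {g : Fin n → Fm L} {c : Clause n}
    (hF : Forces G1 S G2 K Ξ g c) (hlhs : ∀ p ∈ c.lhs, Ξ ∈ interp G1 S G2 K (g p)) :
    Ξ ∈ target G1 S G2 K (c.rhs.map g) :=
  (isPhaseClosed_target _).mem_of_supports ((Set.toFinite c.lhs).image g)
    (Set.forall_mem_image.mpr hlhs) hF

theorem Valid.provable_of_inK {Γ Δ : Set (Fm L)} {n : ℕ} {σ : Fin n → Fm L} {A : Set (Fin n)}
    {r : Option (Fin n)} (hv : Valid G1 S G2 K ⟨Γ ∪ σ '' A, r.map σ⟩)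
    (hΓ : Supports G1 S G2 K Δ Γ) (hσ : ∀ i, (σ i).inK K) :
    Provable G1 S (Δ ∪ σ '' A) (r.map σ) := by
  have h := hv _ (hΓ.union_image hσ A)
  rwa [target_eq_of_inK fun φ hφ => by
    obtain ⟨q, -, rfl⟩ := Option.map_eq_some_iff.mp hφ
    exact hσ q] at h

open Classical in
theorem sat_mem_interp_of_not_provable {Ξ : Set (Fm L)} (hbot : ¬ Provable G1 S Ξ none) {n : ℕ}
    (g : Fin n → Fm L) {c : Clause n}
    (h : (∀ p ∈ c.lhs, Ξ ∈ interp G1 S G2 K (g p)) → Ξ ∈ target G1 S G2 K (c.rhs.map g)) :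
    c.sat fun q => decide (Ξ ∈ interp G1 S G2 K (g q)) := by
  refine c.sat_of_imp _ fun hlhs => ?_
  have hrhs := h fun p hp => of_decide_eq_true (hlhs p hp)
  cases hq : c.rhs with
  | none => exact absurd (by simpa [hq, target] using hrhs) hbot
  | some q => exact ⟨q, rfl, decide_eq_true (by simpa [hq, target] using hrhs)⟩

theorem mem_target_of_coherent (hcoh : Coherent G2) {lr : LeftRule L} (hl : lr ∈ G2.lefts)
    {rr : RightRule L} (hr : rr ∈ G2.rights) (e : rr.conn = lr.conn)
    {σ : Fin (L.arity lr.conn) → Fm L} {Γ Ξ : Set (Fm L)} {E : Option (Fm L)}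
    (hhard : ∀ c ∈ lr.hard, Valid G1 S G2 K ⟨Γ ∪ σ '' c.lhs, c.rhs.map σ⟩)
    (hsoft : ∀ t ∈ lr.soft, Valid G1 S G2 K ⟨Γ ∪ σ '' t, E⟩)
    (hΓ : Supports G1 S G2 K Ξ Γ)
    (hprem : ∀ c ∈ rr.prem, Forces G1 S G2 K Ξ (σ ∘ Fin.cast (congrArg L.arity e)) c) :
    Ξ ∈ target G1 S G2 K E := by
  classical
  by_cases hbot : Provable G1 S Ξ none
  · exact (isPhaseClosed_target E).mem_of_provable_none hbot
  obtain ⟨t, ht, htΞ⟩ : ∃ t ∈ lr.soft, ∀ p ∈ t, Ξ ∈ interp G1 S G2 K (σ p) := by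
    by_contra! hno
    refine hcoh lr hl rr hr e.symm ⟨fun q => decide (Ξ ∈ interp G1 S G2 K (σ q)), ?_, ?_, ?_⟩
    · exact fun c hc => sat_mem_interp_of_not_provable hbot σ fun hlhs =>
        (hhard c hc).mem_target hΓ ((Set.toFinite c.lhs).image σ)
          (Set.forall_mem_image.mpr hlhs)
    · exact fun t ht => (hno t ht).imp fun p ⟨hp, hΞ⟩ => ⟨hp, decide_eq_false hΞ⟩
    · exact fun c hc => sat_mem_interp_of_not_provable hbot _ (hprem c hc).mem_target
  exact (hsoft t ht).mem_target hΓ ((Set.toFinite t).image σ) (Set.forall_mem_image.mpr htΞ)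

theorem valid_of_provable {s : Sequent L} (hs : s.inK K) (h : Deriv G1 S Set.univ s) :
    Valid G1 S G2 K s := fun Δ hΔ => by
  have hsub : s.left ⊆ Δ := fun φ hφ => by simpa [supp_of_inK (hs.1 φ hφ)] using hΔ φ hφ
  rw [target_eq_of_inK hs.2]
  exact Deriv.weakL h hsub

theorem Valid.cut {Γ Δ₀ : Set (Fm L)} {φ : Fm L} {E : Option (Fm L)}
    (h₁ : Valid G1 S G2 K ⟨Γ, some φ⟩) (h₂ : Valid G1 S G2 K ⟨insert φ Δ₀, E⟩) :
    Valid G1 S G2 K ⟨Γ ∪ Δ₀, E⟩ := fun Δ hΔ =>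
  (isPhaseClosed_target E).mem_of_mem_interp (h₁ Δ fun ψ hψ => hΔ ψ (.inl hψ))
    fun Δ' hΔ' hφ => h₂ Δ' <| Set.forall_mem_insert.mpr
      ⟨hφ, fun ψ hψ => supp_mono (hΔ ψ (.inr hψ)) hΔ'⟩

theorem valid_right (hnewR : ∀ rr ∈ G2.rights, rr.conn ∈ K → rr ∈ G1.rights)
    {rr : RightRule L} (hr : rr ∈ G2.rights) {σ : Fin (L.arity rr.conn) → Fm L}
    {Γ : Set (Fm L)} (hprem : ∀ c ∈ rr.prem, Valid G1 S G2 K ⟨Γ ∪ σ '' c.lhs, c.rhs.map σ⟩) :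
    Valid G1 S G2 K ⟨Γ, some (.conn rr.conn σ)⟩ := fun Δ hΔ => by
  by_cases hK : (Fm.conn rr.conn σ).inK K
  · rw [target, interp_of_inK hK]
    exact Deriv.right rr (hnewR rr hr hK.1) σ fun c hc => (hprem c hc).provable_of_inK hΔ hK.2
  · rw [target, interp_conn_of_not_inK hK]
    refine subset_phaseClosure _ (mem_rightSupport.mpr ⟨rr, hr, rfl, fun c hc => ?_⟩)
    exact fun Ξ hΞ hs => hprem c hc Ξ ((hΔ.mono hΞ).union hs)

theorem valid_left (hcoh : Coherent G2)
    (hnewL : ∀ lr ∈ G2.lefts, lr.conn ∈ K → lr ∈ G1.lefts)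
    {lr : LeftRule L} (hl : lr ∈ G2.lefts) {σ : Fin (L.arity lr.conn) → Fm L}
    {Γ : Set (Fm L)} {E : Option (Fm L)}
    (hhard : ∀ c ∈ lr.hard, Valid G1 S G2 K ⟨Γ ∪ σ '' c.lhs, c.rhs.map σ⟩)
    (hsoft : ∀ t ∈ lr.soft, Valid G1 S G2 K ⟨Γ ∪ σ '' t, E⟩) :
    Valid G1 S G2 K ⟨insert (.conn lr.conn σ) Γ, E⟩ := fun Δ hΔ => by
  have hΓ : Supports G1 S G2 K Δ Γ := fun φ hφ => hΔ φ (Set.mem_insert_of_mem _ hφ)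
  have hconn := hΔ _ (Set.mem_insert _ Γ)
  by_cases hK : (Fm.conn lr.conn σ).inK K
  · rw [supp_of_inK hK, Set.mem_ofPred_eq] at hconn
    have h := (isPhaseClosed_target E).insert_conn_mem (hnewL lr hl hK.1)
      (fun c hc => (hhard c hc).provable_of_inK hΓ hK.2)
      fun t ht => hsoft t ht _ (hΓ.union_image hK.2 t)
    rwa [Set.insert_eq_of_mem hconn] at h
  · rw [supp_of_not_inK hK, interp_conn_of_not_inK hK] at hconn
    refine (isPhaseClosed_target E).mem_of_mem_phaseClosure hconn fun Ξ hΞ => ?_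
    obtain ⟨rr, hr, e, hprem⟩ := mem_rightSupport.mp hΞ
    exact mem_target_of_coherent hcoh hl hr e hhard hsoft (hΓ.mono Set.subset_union_right)
      fun c hc => (hprem c hc).mono Set.subset_union_left

theorem valid_of_deriv (hcoh : Coherent G2)
    (hnewR : ∀ rr ∈ G2.rights, rr.conn ∈ K → rr ∈ G1.rights)
    (hnewL : ∀ lr ∈ G2.lefts, lr.conn ∈ K → lr ∈ G1.lefts)
    (hS : ∀ t ∈ S, t.inK K) {t : Sequent L} (h : Deriv G2 S Set.univ t) :
    Valid G1 S G2 K t := by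
  induction h with
  | hyp hs => exact valid_of_provable (hS _ hs) (.hyp hs)
  | ax φ => exact fun Δ hΔ => supp_subset_interp φ (hΔ φ rfl)
  | weakL _ hsub ih => exact fun Δ hΔ => ih Δ fun φ hφ => hΔ φ (hsub hφ)
  | weakR ψ _ ih => exact fun Δ hΔ => (isPhaseClosed_target _).mem_of_provable_none (ih Δ hΔ)
  | cut _ _ _ ih₁ ih₂ => exact ih₁.cut ih₂
  | right rr hr σ _ ih => exact valid_right hnewR hr ih
  | left lr hl σ _ _ ihh ihs => exact valid_left hcoh hnewL hl ihh ihs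

end Model

end PhaseModel

theorem conservativity_general {L : Lang} (K : Set L.Conn) (G1 G2 : CanSys L)
    (hcoh2 : Coherent G2)
    (hsubR : G1.rights ⊆ G2.rights) (hsubL : G1.lefts ⊆ G2.lefts)
    (hnewR : ∀ rr ∈ G2.rights, rr.conn ∈ K → rr ∈ G1.rights)
    (hnewL : ∀ lr ∈ G2.lefts, lr.conn ∈ K → lr ∈ G1.lefts)
    (S : Set (Sequent L)) (s : Sequent L)
    (hS : ∀ t ∈ S, t.inK K) (hs : s.inK K) :
    Deriv G1 S Set.univ s ↔ Deriv G2 S Set.univ s := by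
  refine ⟨Deriv.mono_rules hsubR hsubL, fun h => ?_⟩
  have hvalid := PhaseModel.valid_of_deriv hcoh2 hnewR hnewL hS h
  have hleft := hvalid s.left (PhaseModel.supports_of_subset hs.1 subset_rfl)
  rwa [PhaseModel.target_eq_of_inK hs.2] at hleft

/-- Conservativity: if the coherent canonical system G₂ extends
the coherent canonical system G₁ (whose connectives all lie in K) only by rules
for connectives outside K, then for sequents in the K-sublanguage, derivability
in G₁ and in G₂ coincide. -/
theorem conservativity {L : Lang} (K : Set L.Conn) (G1 G2 : CanSys L)
    (hcoh1 : Coherent G1) (hcoh2 : Coherent G2)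
    (hsubR : G1.rights ⊆ G2.rights) (hsubL : G1.lefts ⊆ G2.lefts)
    (hK1R : ∀ rr ∈ G1.rights, rr.conn ∈ K)
    (hK1L : ∀ lr ∈ G1.lefts, lr.conn ∈ K)
    (hnewR : ∀ rr ∈ G2.rights, rr.conn ∈ K → rr ∈ G1.rights)
    (hnewL : ∀ lr ∈ G2.lefts, lr.conn ∈ K → lr ∈ G1.lefts)
    (S : Set (Sequent L)) (s : Sequent L)
    (hS : ∀ t ∈ S, t.inK K) (hs : s.inK K) :
    Deriv G1 S Set.univ s ↔ Deriv G2 S Set.univ s :=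
  conservativity_general K G1 G2 hcoh2 hsubR hsubL hnewR hnewL S s hS hs
end

section
/- Semantic characterization of intuitionistic implication: An L-frame ⟨W, ≤, v⟩ respects both canonical rules for ⊃ (the left rule ⟨{⇒ p₁},{p₂ ⇒}⟩ / p₁ ⊃ p₂ ⇒ and the right rule {p₁ ⇒ p₂} / ⇒ p₁ ⊃ p₂) if and only if for all a ∈ W and formulas φ, ψ: v(a, φ ⊃ ψ) = t iff for every b ≥ a, v(b, φ) = f or v(b, ψ) = t. -/
/-- The language with a single binary connective ⊃. -/
def L2 : Lang := ⟨Unit, fun _ => 2⟩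

/-- The right rule {p₁ ⇒ p₂} / ⇒ p₁ ⊃ p₂. -/
def impRight : RightRule L2 := ⟨(), ({⟨{0}, some 1⟩} : Set (Clause 2))⟩

/-- The left rule ⟨{⇒ p₁}, {p₂ ⇒}⟩ / p₁ ⊃ p₂ ⇒. -/
def impLeft : LeftRule L2 :=
  ⟨(), ({⟨∅, some 0⟩} : Set (Clause 2)), ({{1}} : Set (Set (Fin 2)))⟩

/-- φ ⊃ ψ. -/
def imp (φ ψ : Fm L2) : Fm L2 :=
  Fm.conn () (fun i : Fin 2 => if i.val = 0 then φ else ψ)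

lemma conn_eq_imp (σ : Fin 2 → Fm L2) :
    Fm.conn (L := L2) () σ = imp (σ 0) (σ 1) := by
  unfold imp
  congr 1
  funext i
  fin_cases i <;> simp

/-- A persistent frame respects both rules for ⊃ iff it treats ⊃
exactly as in intuitionistic Kripke semantics. -/
theorem imp_semantic_characterization (W : Type) (le : W → W → Prop)
    (hrefl : ∀ a, le a a) (htrans : ∀ a b c, le a b → le b c → le a c)
    (hanti : ∀ a b, le a b → le b a → a = b) (hne : Nonempty W)
    (v : W → Fm L2 → Bool) (hpers : PersistentU le v) :
    (RespL le v impLeft ∧ RespR le v impRight) ↔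
      (∀ (a : W) (φ ψ : Fm L2),
        v a (imp φ ψ) = true ↔ ∀ b, le a b → (v b φ = false ∨ v b ψ = true)) := by
  constructor
  · rintro ⟨hL, hR⟩ a φ ψ
    constructor
    · intro htrue b hab
      by_contra hcon
      push_neg at hcon
      obtain ⟨hφ, hψ⟩ := hcon
      simp only [ne_eq, Bool.not_eq_false] at hφ
      simp only [ne_eq, Bool.not_eq_true] at hψ
      have hbt : v b (imp φ ψ) = true := hpers _ a b hab htrue
      have hbf : v b (imp φ ψ) = false := by
        have := hL b (fun i : Fin 2 => if i.val = 0 then φ else ψ) ?_ ?_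
        · exact this
        · intro c hc
          rcases hc with rfl
          intro d hbd
          right
          exact ⟨φ, rfl, hpers φ b d hbd hφ⟩
        · intro t ht
          rcases ht with rfl
          left
          exact ⟨ψ, ⟨(1 : Fin 2), rfl, rfl⟩, hψ⟩
      rw [hbt] at hbf; exact absurd hbf (by simp)
    · intro h
      have := hR a (fun i : Fin 2 => if i.val = 0 then φ else ψ) ?_
      · exact this
      · intro c hc
        rcases hc with rfl
        intro b hab
        rcases h b hab with hφ | hψ
        · left; exact ⟨φ, ⟨(0 : Fin 2), rfl, rfl⟩, hφ⟩
        · right; exact ⟨ψ, rfl, hψ⟩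
  · intro h
    constructor
    · intro a σ hhard hsoft
      have h0 : v a (σ (0 : Fin 2)) = true := by
        have := hhard ⟨∅, some (0 : Fin 2)⟩ rfl a (hrefl a)
        rcases this with ⟨x, hx, _⟩ | ⟨χ, hχ, hv⟩
        · simp [Clause.seq] at hx
        · simp only [Clause.seq, Option.map_some] at hχ
          injection hχ with hχ; subst hχ; exact hv
      have h1 : v a (σ (1 : Fin 2)) = false := by
        have := hsoft {(1 : Fin 2)} rfl
        rcases this with ⟨x, ⟨i, hi, rfl⟩, hv⟩ | ⟨_, hc, _⟩
        · rcases hi with rfl; exact hv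
        · exact absurd hc (by simp)
      by_contra hcon
      rw [Bool.not_eq_false] at hcon
      have hceq : Fm.conn impLeft.conn σ = imp (σ (0 : Fin 2)) (σ (1 : Fin 2)) :=
        conn_eq_imp σ
      rw [hceq] at hcon
      rcases (h a _ _).mp hcon a (hrefl a) with h' | h'
      · rw [h0] at h'; exact absurd h' (by simp)
      · rw [h1] at h'; exact absurd h' (by simp)
    · intro a σ hprem
      have hceq : Fm.conn impRight.conn σ = imp (σ (0 : Fin 2)) (σ (1 : Fin 2)) :=
        conn_eq_imp σ
      rw [hceq]
      apply (h a _ _).mpr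
      intro b hab
      have := hprem ⟨{(0 : Fin 2)}, some (1 : Fin 2)⟩ rfl b hab
      rcases this with ⟨x, ⟨i, hi, rfl⟩, hv⟩ | ⟨χ, hχ, hv⟩
      · rcases hi with rfl; left; exact hv
      · simp only [Clause.seq, Option.map_some] at hχ
        injection hχ with hχ; subst hχ; right; exact hv
end
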